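/- arXiv:1905.03571 — 3 statements merged into one kernel-verified Lean document; each statement's English description precedes it below -/
import Mathlib

section
/- Let q, p, α, δ be real numbers with q > 0, let p' = (1−q)·p + q², and set s¹ = min(q·α − δ, ((1−q)/q)·(δ − p·α)). Then (1−q)·p·α + q·(s¹ + δ) = min(δ, p'·α); that is, at this selling price the expected cost of buying information after the special pattern equals the expected cost of not buying it. -/
theorem buy_cost_eq_at_optimal_price (q p α δ : ℝ) (hq : q > 0) :
    (1 - q) * p * α + q * (min (q * α - δ) (((1 - q) / q) * (δ - p * α)) + δ) =
      min δ (((1 - q) * p + q ^ 2) * α) := by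
  have hq' : q ≠ 0 := ne_of_gt hq
  have h3 : q * ((1 - q) / q * (δ - p * α)) = (1 - q) * (δ - p * α) := by
    field_simp
  rcases min_cases (q * α - δ) (((1 - q) / q) * (δ - p * α)) with ⟨h1, h2⟩ | ⟨h1, h2⟩ <;>
    rw [h1] <;> rw [eq_comm, min_eq_iff]
  · right
    constructor
    · ring
    · nlinarith [mul_le_mul_of_nonneg_left h2 hq.le]
  · left
    constructor
    · linarith [h3]
    · nlinarith [mul_le_mul_of_nonneg_left h2.le hq.le]
end

section
/- Let q, p, α, δ be real numbers with 0 < q < 1 and p·α < δ < q·α, and let p' = (1−q)·p + q². Then there exists a selling price s¹ > 0 such that (1−q)·p·α + q·(s¹ + δ) ≤ min(δ, p'·α); that is, when defending is neither always nor never optimal, a strictly positive selling price exists at which buying information after the special pattern is cost-effective. -/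
theorem exists_positive_price (q p α δ : ℝ) (hq0 : 0 < q) (hq1 : q < 1)
    (h1 : p * α < δ) (h2 : δ < q * α) :
    ∃ s1 : ℝ, s1 > 0 ∧
      (1 - q) * p * α + q * (s1 + δ) ≤ min δ (((1 - q) * p + q ^ 2) * α) := by
  have h1q : (0:ℝ) < 1 - q := by linarith
  refine ⟨min (q * α - δ) ((1 - q) * (δ - p * α) / q), ?_, ?_⟩
  · exact lt_min (by linarith) (div_pos (mul_pos h1q (by linarith)) hq0)
  · apply le_min
    · have hle : min (q * α - δ) ((1 - q) * (δ - p * α) / q) ≤ (1 - q) * (δ - p * α) / q :=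
        min_le_right _ _
      have h3 : q * ((1 - q) * (δ - p * α) / q) = (1 - q) * (δ - p * α) := by
        field_simp
      nlinarith [mul_le_mul_of_nonneg_left hle hq0.le]
    · have hle : min (q * α - δ) ((1 - q) * (δ - p * α) / q) ≤ q * α - δ := min_le_left _ _
      nlinarith [mul_le_mul_of_nonneg_left hle hq0.le]
end

section
/- For every real r with 0 < r < 1, f₁(r) > f₂(r), where f₁(r) = 1 − 1/(1 + log₂(r+1)) and f₂(r) = 1 − (1/2)^r; that is, f₁ rises faster than f₂ up to the value 1/2, which both functions attain at r = 1. -/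
open Real

lemma aux_exp_lt (r : ℝ) (h0 : 0 < r) (h1 : r < 1) : (2:ℝ) ^ r < 1 + r := by
  have hlog : (0:ℝ) ≠ Real.log 2 := by
    have : (0:ℝ) < Real.log 2 := Real.log_pos (by norm_num)
    linarith
  have h := strictConvexOn_exp.2 (Set.mem_univ 0) (Set.mem_univ (Real.log 2))
    hlog (by linarith : 0 < 1 - r) h0 (by ring)
  simp only [smul_eq_mul, mul_zero, zero_add, Real.exp_zero, Real.exp_log (by norm_num : (0:ℝ) < 2)] at h
  have h2 : (2:ℝ) ^ r = Real.exp (r * Real.log 2) := by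
    rw [Real.rpow_def_of_pos (by norm_num)]; ring_nf
  rw [h2]; linarith

lemma aux_log_gt (r : ℝ) (h0 : 0 < r) (h1 : r < 1) : r < Real.logb 2 (r + 1) := by
  have h := strictConcaveOn_log_Ioi.2 (Set.mem_Ioi.mpr (by norm_num : (0:ℝ) < 1))
    (Set.mem_Ioi.mpr (by norm_num : (0:ℝ) < 2))
    (by norm_num : (1:ℝ) ≠ 2) (by linarith : 0 < 1 - r) h0 (by ring)
  simp only [smul_eq_mul, mul_one, Real.log_one, mul_zero, zero_add] at h
  have harg : 1 - r + r * 2 = r + 1 := by ring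
  rw [harg] at h
  have hl2 : (0:ℝ) < Real.log 2 := Real.log_pos (by norm_num)
  rw [Real.logb, lt_div_iff₀ hl2]
  linarith

theorem pob_f1_gt_f2 (r : ℝ) (h0 : 0 < r) (h1 : r < 1) :
    1 - 1 / (1 + Real.logb 2 (r + 1)) > 1 - (1 / 2) ^ r := by
  have h2 := aux_exp_lt r h0 h1
  have h3 := aux_log_gt r h0 h1
  have hpow : (0:ℝ) < (2:ℝ) ^ r := Real.rpow_pos_of_pos (by norm_num) r
  have hkey : (2:ℝ) ^ r < 1 + Real.logb 2 (r + 1) := by linarith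
  have hhalf : ((1:ℝ)/2) ^ r = 1 / (2:ℝ) ^ r := by
    rw [Real.div_rpow (by norm_num) (by norm_num), Real.one_rpow]
  rw [hhalf]
  have : 1 / (1 + Real.logb 2 (r + 1)) < 1 / (2:ℝ) ^ r :=
    one_div_lt_one_div_of_lt hpow hkey
  linarith
end
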